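/- For real z with 0 ≤ z < 1, ∑_{n=0}^{∞} C(2n,n)^2 (z/4)^{2n} = (2/π) K(z), where K(k) = ∫_0^{π/2} dθ / √(1 − k² sin²θ) is the complete elliptic integral of the first kind. -/

import Mathlib

/-!
Since `Ring.choose (-1/2) n = (-1/4)^n C(2n,n)`, the binomial series reads
`1 / √(1 - x) = ∑ C(2n,n) (x/4)^n` for `|x| < 1`. Put `x = k² sin² θ`, integrate term by term over
`[0, π/2]` (the series at `x = k²` dominates), and evaluate each term by Wallis' formula
`∫₀^{π/2} sin^{2n} θ dθ = (π/2) C(2n,n) / 4^n`.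
-/

noncomputable def ellipticK (k : ℝ) : ℝ :=
  ∫ θ in (0 : ℝ)..(Real.pi / 2), 1 / Real.sqrt (1 - k ^ 2 * Real.sin θ ^ 2)

open Polynomial Real

section CharZeroField

variable {K : Type*} [Field K] [CharZero K]

theorem Ring.choose_succ_mul_succ (a : K) (k : ℕ) :
    Ring.choose a (k + 1) * (k + 1) = Ring.choose a k * (a - k) := by
  have h := Ring.descPochhammer_eq_factorial_smul_choose a (k + 1)
  rw [descPochhammer_succ_right, smeval_mul, Ring.descPochhammer_eq_factorial_smul_choose] at h
  simp only [smeval_sub, smeval_X, smeval_natCast, pow_one, pow_zero, mul_one, nsmul_eq_mul,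
    Nat.factorial_succ, Nat.cast_mul, Nat.cast_succ] at h
  apply mul_left_cancel₀ (Nat.cast_ne_zero.mpr k.factorial_ne_zero)
  linear_combination -h

theorem Nat.cast_centralBinom_succ (n : ℕ) :
    ((n + 1).centralBinom : K) = 2 * (2 * n + 1) / (n + 1) * n.centralBinom := by
  rw [div_mul_eq_mul_div, eq_div_iff n.cast_add_one_ne_zero, mul_comm]
  exact_mod_cast Nat.succ_mul_centralBinom_succ n

theorem Ring.choose_neg_one_half (n : ℕ) :
    Ring.choose (-1 / 2 : K) n = (-1 / 4) ^ n * n.centralBinom := by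
  induction n with
  | zero => simp
  | succ n ih =>
    have h := Ring.choose_succ_mul_succ (-1 / 2 : K) n
    rw [ih, ← eq_div_iff n.cast_add_one_ne_zero] at h
    rw [h, Nat.cast_centralBinom_succ]
    field_simp
    ring

end CharZeroField

theorem hasSum_centralBinom_mul_pow {x : ℝ} (hx : |x| < 1) :
    HasSum (fun n : ℕ ↦ n.centralBinom * (x / 4) ^ n) (1 / √(1 - x)) := by
  have hx' : -x ∈ Metric.eball (0 : ℝ) 1 := by
    rw [Metric.mem_eball, edist_zero_right]
    simpa [enorm_eq_nnnorm, ← NNReal.coe_lt_coe] using hx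
  have h := one_add_rpow_hasFPowerSeriesOnBall_zero (a := -1 / 2) |>.hasSum hx'
  have hterm (n : ℕ) : Ring.choose (-1 / 2 : ℝ) n • (-x) ^ n = n.centralBinom * (x / 4) ^ n := by
    rw [Ring.choose_neg_one_half, smul_eq_mul, mul_right_comm, ← mul_pow, mul_comm]
    ring_nf
  have hvalue : (1 + (0 + -x)) ^ (-1 / 2 : ℝ) = 1 / √(1 - x) := by
    rw [one_div, sqrt_eq_rpow, ← rpow_neg (by linarith [le_abs_self x])]
    ring_nf
  simpa only [binomialSeries, FormalMultilinearSeries.ofScalars_apply_eq, hterm, hvalue] using h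

theorem integral_sin_pow_even_pi_div_two (n : ℕ) :
    ∫ θ in 0..π / 2, sin θ ^ (2 * n) = π / 2 * (n.centralBinom / 4 ^ n) := by
  induction n with
  | zero => simp
  | succ n ih =>
    rw [Nat.mul_succ, integral_sin_pow, ih, Nat.cast_centralBinom_succ, sin_zero, cos_pi_div_two,
      zero_pow (Nat.succ_ne_zero _), zero_mul, mul_zero, sub_zero, zero_div, zero_add]
    push_cast
    field_simp
    ring

theorem hasSum_ellipticK {k : ℝ} (hk : |k| < 1) :
    HasSum (fun n : ℕ ↦ π / 2 * n.centralBinom ^ 2 * (k / 4) ^ (2 * n)) (ellipticK k) := by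
  have hk2 : |k ^ 2| < 1 := by rwa [abs_pow, sq_lt_one_iff₀ (abs_nonneg k)]
  have hsin_le (θ : ℝ) : k ^ 2 * sin θ ^ 2 ≤ k ^ 2 :=
    mul_le_of_le_one_right (sq_nonneg k) (sin_sq_le_one θ)
  have hterm (n : ℕ) :
      ∫ θ in 0..π / 2, (n.centralBinom : ℝ) * (k ^ 2 * sin θ ^ 2 / 4) ^ n
        = π / 2 * n.centralBinom ^ 2 * (k / 4) ^ (2 * n) := by
    simp_rw [mul_div_right_comm, mul_pow, ← pow_mul, ← mul_assoc]
    rw [intervalIntegral.integral_const_mul, integral_sin_pow_even_pi_div_two, pow_mul,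
      show (k / 4) ^ 2 = k ^ 2 / 4 * (1 / 4) by ring, mul_pow, one_div_pow]
    ring
  refine (intervalIntegral.hasSum_integral_of_dominated_convergence
    (fun n _ ↦ n.centralBinom * (k ^ 2 / 4) ^ n) (fun n ↦ by fun_prop) ?dominated ?summable
    intervalIntegrable_const ?pointwise).congr_fun fun n ↦ (hterm n).symm
  case dominated =>
    refine fun n ↦ .of_forall fun θ _ ↦ ?_
    rw [norm_of_nonneg (by positivity)]
    gcongr
    exact hsin_le θ
  case summable => exact .of_forall fun _ _ ↦ (hasSum_centralBinom_mul_pow hk2).summable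
  case pointwise =>
    refine .of_forall fun θ _ ↦ hasSum_centralBinom_mul_pow ?_
    rw [abs_of_nonneg (by positivity)]
    exact (hsin_le θ).trans_lt (lt_of_abs_lt hk2)

theorem central_binom_sq_genfun (z : ℝ) (h0 : 0 ≤ z) (h1 : z < 1) :
    ∑' n : ℕ, ((2 * n).choose n : ℝ) ^ 2 * (z / 4) ^ (2 * n) =
      (2 / Real.pi) * ellipticK z := by
  have hz : |z| < 1 := abs_lt.mpr ⟨by linarith, h1⟩
  refine ((hasSum_ellipticK hz).mul_left (2 / π)).congr_fun (fun n ↦ ?_) |>.tsum_eq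
  rw [← Nat.centralBinom_eq_two_mul_choose]
  field_simp
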